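/- The minimum over r ∈ [0,1] of L(f_r), the loss of the group-wise mass-threshold classifier with common FPR r, is attained at some FP-boundary: min_{r ∈ I_FP} L(f_r) = min_{r ∈ [0,1]} L(f_r). -/

import Mathlib

open Finset

/-- `P` is a probability distribution on `X × Z × Y` with `Z = Bool` (group, `true` = A,
`false` = D) and `Y = Bool` (label, `true` = 1). -/
def IsDist {X : Type*} [Fintype X] (P : X × Bool × Bool → ℝ) : Prop :=
  (∀ p, 0 ≤ P p) ∧ ∑ p : X × Bool × Bool, P p = 1

/-- mass of the feature-group cell `(x, z)`. -/
noncomputable def cellMass {X : Type*} (P : X × Bool × Bool → ℝ) (x : X) (z : Bool) : ℝ :=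
  P (x, z, false) + P (x, z, true)

/-- total mass of group `z`. -/
noncomputable def gMass {X : Type*} [Fintype X] (P : X × Bool × Bool → ℝ) (z : Bool) : ℝ :=
  ∑ x, cellMass P x z

/-- score of the cell `(x, z)`: `Pr[Y = 1 | X = x, Z = z]`. -/
noncomputable def score {X : Type*} (P : X × Bool × Bool → ℝ) (x : X) (z : Bool) : ℝ :=
  P (x, z, true) / cellMass P x z

/-- A randomized classifier takes values in `[0,1]`. -/
def InUnit {X : Type*} (f : X × Bool → ℝ) : Prop := ∀ p, f p ∈ Set.Icc (0 : ℝ) 1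

/-- selection rate of randomized classifier `f` on group `z`: `E[f(X,Z) | Z = z]`. -/
noncomputable def selRate {X : Type*} [Fintype X] (P : X × Bool × Bool → ℝ) (f : X × Bool → ℝ)
    (z : Bool) : ℝ :=
  (∑ x, f (x, z) * cellMass P x z) / gMass P z

/-- 0-1 loss of randomized classifier `f` under `P`. -/
noncomputable def loss {X : Type*} [Fintype X] (P : X × Bool × Bool → ℝ) (f : X × Bool → ℝ) : ℝ :=
  ∑ x, ∑ z, (P (x, z, true) * (1 - f (x, z)) + P (x, z, false) * f (x, z))

/-- Demographic parity: equal selection rates on the two groups. -/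
def DP {X : Type*} [Fintype X] (P : X × Bool × Bool → ℝ) (f : X × Bool → ℝ) : Prop :=
  selRate P f true = selRate P f false

/-- false positive rate of `f` on group `z`: `E[f(X,Z) | Y = 0, Z = z]`. -/
noncomputable def fpr {X : Type*} [Fintype X] (P : X × Bool × Bool → ℝ) (f : X × Bool → ℝ)
    (z : Bool) : ℝ :=
  (∑ x, f (x, z) * P (x, z, false)) / (∑ x, P (x, z, false))

/-- `f` is a (group-wise) mass-threshold classifier: within each group it accepts a
prefix of the cells sorted in decreasing order of score (fractionally at the boundary). -/
def IsPrefix {X : Type*} (P : X × Bool × Bool → ℝ) (f : X × Bool → ℝ) : Prop :=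
  ∀ z x x', 0 < cellMass P x z → 0 < cellMass P x' z →
    score P x' z < score P x z → 0 < f (x', z) → f (x, z) = 1

/-- cells of equal score within a group have been merged, i.e. scores of distinct
positive-mass cells within a group are distinct ("strictly decreasing" when sorted). -/
def MergedScores {X : Type*} (P : X × Bool × Bool → ℝ) : Prop :=
  ∀ z x x', 0 < cellMass P x z → 0 < cellMass P x' z → score P x z = score P x' z → x = x'

/-- `r` is an FP-boundary if the group-wise mass-threshold classifier with false positive
rate `r` on both groups is deterministic on some group (its threshold sits at a score
boundary of that group). -/
def IsFPBoundary {X : Type*} [Fintype X] (P : X × Bool × Bool → ℝ) (r : ℝ) : Prop :=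
  ∃ f : X × Bool → ℝ, InUnit f ∧ IsPrefix P f ∧
    (∀ x z, 0 < cellMass P x z → score P x z = 1 → f (x, z) = 1) ∧
    (∀ z, fpr P f z = r) ∧
    ∃ z : Bool, ∀ x, 0 < cellMass P x z → (f (x, z) = 0 ∨ f (x, z) = 1)

/-!
For every `r ∈ [0,1]` the classifier `f_r` exists: fill each group in decreasing order of score
until the false-positive budget is spent. If `f_r` is fractional on both groups, `MergedScores`
leaves exactly one fractional cell per group. Shifting these two values so that both false positive
rates move by the same `t` keeps a mass-threshold classifier while the values stay in `[0,1]`, and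
changes the loss affinely in `t`; the end of this segment in the non-increasing direction is an
FP-boundary `r'` with `L r' ≤ L r`. The FP-boundaries form a finite set containing `1`, so `L`
attains a minimum on them, which is then the minimum over `[0,1]`.
-/

theorem Finset.sum_sub_telescope_of_injOn {α β M G : Type*} [LinearOrder β] [AddCommMonoid M]
    [AddCommGroup G] (S : Finset α) {σ : α → β} (hσ : Set.InjOn σ S) (p : α → M) (g : M → G) :
    ∑ x ∈ S, (g (∑ y ∈ S with σ x < σ y, p y + p x) - g (∑ y ∈ S with σ x < σ y, p y)) =
      g (∑ x ∈ S, p x) - g 0 := by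
  classical
  induction S using Finset.induction_on_min_value σ with
  | empty => simp
  | insert a S haS hmin ih =>
    have hlt : ∀ x ∈ S, σ a < σ x := fun x hx =>
      (hmin x hx).lt_of_ne fun h => haS (hσ (mem_insert_self a S) (mem_insert_of_mem hx) h ▸ hx)
    have habove : ∀ x ∈ S, {y ∈ insert a S | σ x < σ y} = {y ∈ S | σ x < σ y} := fun x hx => by
      rw [filter_insert, if_neg (hlt x hx).not_gt]
    have hbottom : {y ∈ insert a S | σ a < σ y} = S := by
      rw [filter_insert, if_neg (lt_irrefl _), filter_true_of_mem hlt]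
    have hS : ∑ x ∈ S, (g (∑ y ∈ insert a S with σ x < σ y, p y + p x) -
        g (∑ y ∈ insert a S with σ x < σ y, p y)) = g (∑ x ∈ S, p x) - g 0 := by
      rw [← ih (hσ.mono (coe_subset.mpr (subset_insert a S)))]
      exact sum_congr rfl fun x hx => by rw [habove x hx]
    rw [sum_insert haS, hbottom, hS, sum_insert haS, add_comm (p a)]
    abel

theorem exists_nonpos_add_mul_mem_Icc_eq_zero {ι : Type*} [Finite ι] [Nonempty ι] {a c : ι → ℝ}
    (ha : ∀ i, a i ∈ Set.Icc 0 1) (hc : ∀ i, 0 < c i) :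
    ∃ t ≤ 0, (∀ i, a i + t * c i ∈ Set.Icc 0 1) ∧ ∃ i, a i + t * c i = 0 := by
  obtain ⟨i₀, hi₀⟩ := Finite.exists_max fun i => -a i / c i
  have ht : -a i₀ / c i₀ ≤ 0 := div_nonpos_of_nonpos_of_nonneg (by linarith [(ha i₀).1]) (hc i₀).le
  refine ⟨-a i₀ / c i₀, ht, fun i => ⟨?_, ?_⟩, i₀, by field_simp [(hc i₀).ne']; ring⟩
  · linarith [(div_le_iff₀ (hc i)).mp (hi₀ i)]
  · nlinarith [(ha i).2, hc i]

theorem exists_add_mul_mem_Icc_endpoint {ι : Type*} [Finite ι] [Nonempty ι] {a c : ι → ℝ}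
    (ha : ∀ i, a i ∈ Set.Icc 0 1) (hc : ∀ i, 0 < c i) (D : ℝ) :
    ∃ t, t * D ≤ 0 ∧ (∀ i, a i + t * c i ∈ Set.Icc 0 1) ∧
      ∃ i, a i + t * c i = 0 ∨ a i + t * c i = 1 := by
  rcases le_total 0 D with hD | hD
  · obtain ⟨t, ht, hmem, i, hi⟩ := exists_nonpos_add_mul_mem_Icc_eq_zero ha hc
    exact ⟨t, mul_nonpos_of_nonpos_of_nonneg ht hD, hmem, i, Or.inl hi⟩
  · obtain ⟨t, ht, hmem, i, hi⟩ := exists_nonpos_add_mul_mem_Icc_eq_zero (a := fun i => 1 - a i)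
      (fun i => ⟨by linarith [(ha i).2], by linarith [(ha i).1]⟩) hc
    refine ⟨-t, by nlinarith, fun j => ⟨?_, ?_⟩, i, Or.inr (by linarith)⟩ <;>
      linarith [(hmem j).1, (hmem j).2]

theorem min_sub_min_mem_Icc {s a p : ℝ} (hp : 0 ≤ p) : min s (a + p) - min s a ∈ Set.Icc 0 p := by
  constructor
  · linarith [min_le_min_left s (le_add_of_nonneg_right hp : a ≤ a + p)]
  · rw [sub_le_iff_le_add, add_comm p, ← min_add_add_right]
    exact min_le_min_right _ (le_add_of_nonneg_right hp)

section Cells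

variable {X : Type*} {P : X × Bool × Bool → ℝ} {f g : X × Bool → ℝ}

theorem score_lt_one (hP : ∀ p, 0 ≤ P p) {x : X} {z : Bool} (h : 0 < P (x, z, false)) :
    score P x z < 1 := by
  rw [score, div_lt_one (by unfold cellMass; linarith [hP (x, z, true)])]
  unfold cellMass
  linarith

theorem score_le_one (hP : ∀ p, 0 ≤ P p) {x : X} {z : Bool} (h : 0 < cellMass P x z) :
    score P x z ≤ 1 := by
  rw [score, div_le_one h]
  unfold cellMass
  linarith [hP (x, z, false)]

theorem score_eq_one (hP : ∀ p, 0 ≤ P p) {x : X} {z : Bool} (h : 0 < cellMass P x z)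
    (hneg : ¬0 < P (x, z, false)) : score P x z = 1 := by
  have h0 : P (x, z, false) = 0 := le_antisymm (not_lt.mp hneg) (hP _)
  rw [cellMass, h0, zero_add] at h
  rw [score, cellMass, h0, zero_add, div_self h.ne']

structure IsMassThreshold (P : X × Bool × Bool → ℝ) (f : X × Bool → ℝ) : Prop where
  inUnit : InUnit f
  isPrefix : IsPrefix P f
  eq_one_of_score_eq_one : ∀ x z, 0 < cellMass P x z → score P x z = 1 → f (x, z) = 1

def IsDeterministicOn (P : X × Bool × Bool → ℝ) (f : X × Bool → ℝ) (z : Bool) : Prop :=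
  ∀ x, 0 < cellMass P x z → f (x, z) = 0 ∨ f (x, z) = 1

theorem IsPrefix.eq_of_mem_Ioo (hf : IsPrefix P f) (hm : MergedScores P) {z : Bool} {x x' : X}
    (hx : 0 < cellMass P x z) (hx' : 0 < cellMass P x' z)
    (hfx : f (x, z) ∈ Set.Ioo 0 1) (hfx' : f (x', z) ∈ Set.Ioo 0 1) : x = x' := by
  rcases lt_trichotomy (score P x z) (score P x' z) with hlt | heq | hgt
  · exact absurd (hf z x' x hx' hx hlt hfx.1) hfx'.2.ne
  · exact hm z x x' hx hx' heq
  · exact absurd (hf z x x' hx hx' hgt hfx'.1) hfx.2.ne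

theorem IsMassThreshold.of_eq_of_not_mem_Ioo (hf : IsMassThreshold P f) (hg : InUnit g)
    (hfg : ∀ q, g q ≠ f q → f q ∈ Set.Ioo 0 1) : IsMassThreshold P g := by
  have hone : ∀ q, f q = 1 → g q = 1 := fun q hfq =>
    by_contra fun hgq => (hfg q fun h => hgq (h.trans hfq)).2.ne hfq
  have hpos : ∀ q, 0 < g q → 0 < f q := fun q hgq =>
    if h : g q = f q then h ▸ hgq else (hfg q h).1
  exact ⟨hg, fun z x x' hx hx' hlt hgx' => hone _ (hf.isPrefix z x x' hx hx' hlt (hpos _ hgx')),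
    fun x z hx hs => hone _ (hf.eq_one_of_score_eq_one x z hx hs)⟩

end Cells

section Threshold

variable {X : Type*} [Fintype X] {P : X × Bool × Bool → ℝ}

noncomputable def negMassAbove (P : X × Bool × Bool → ℝ) (x : X) (z : Bool) : ℝ :=
  ∑ y with 0 < P (y, z, false) ∧ score P x z < score P y z, P (y, z, false)

/-- The classifier `f_r`: cell `(x, z)` receives, out of the budget `r * ∑ x, P (x, z, false)` of
negative mass, what the cells of higher score in group `z` have left over. -/
noncomputable def fprThreshold (P : X × Bool × Bool → ℝ) (r : ℝ) (q : X × Bool) : ℝ :=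
  if 0 < P (q.1, q.2, false) then
    (min (r * ∑ x, P (x, q.2, false)) (negMassAbove P q.1 q.2 + P (q.1, q.2, false)) -
      min (r * ∑ x, P (x, q.2, false)) (negMassAbove P q.1 q.2)) / P (q.1, q.2, false)
  else 1

theorem fprThreshold_mem_Icc (r : ℝ) : InUnit (fprThreshold P r) := by
  rintro ⟨x, z⟩
  unfold fprThreshold
  split_ifs with hx
  · obtain ⟨h0, h1⟩ := min_sub_min_mem_Icc (s := r * ∑ x, P (x, z, false))
      (a := negMassAbove P x z) hx.le
    exact ⟨div_nonneg h0 hx.le, (div_le_one hx).mpr h1⟩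
  · exact ⟨zero_le_one, le_rfl⟩

theorem negMassAbove_add_le (hP : ∀ p, 0 ≤ P p) {x x' : X} {z : Bool}
    (hx : 0 < P (x, z, false)) (hlt : score P x' z < score P x z) :
    negMassAbove P x z + P (x, z, false) ≤ negMassAbove P x' z := by
  classical
  have hsub : insert x ({y | 0 < P (y, z, false) ∧ score P x z < score P y z} : Finset X) ⊆
      ({y | 0 < P (y, z, false) ∧ score P x' z < score P y z} : Finset X) := by
    intro y hy
    rcases mem_insert.mp hy with rfl | hy
    · simpa using ⟨hx, hlt⟩
    · simp only [mem_filter, mem_univ, true_and] at hy ⊢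
      exact ⟨hy.1, hlt.trans hy.2⟩
  have := sum_le_sum_of_subset_of_nonneg hsub fun y _ _ => hP (y, z, false)
  rwa [sum_insert (by simp), add_comm] at this

theorem isMassThreshold_fprThreshold (hP : ∀ p, 0 ≤ P p) (r : ℝ) :
    IsMassThreshold P (fprThreshold P r) where
  inUnit := fprThreshold_mem_Icc r
  isPrefix z x x' hx hx' hlt hpos := by
    have hx'neg : 0 < P (x', z, false) := by
      by_contra h
      exact (score_le_one hP hx).not_gt (score_eq_one hP hx' h ▸ hlt)
    by_cases hxneg : 0 < P (x, z, false)
    swap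
    · simp [fprThreshold, hxneg]
    have hbudget : negMassAbove P x' z < r * ∑ x, P (x, z, false) := by
      by_contra! h
      simp only [fprThreshold, if_pos hx'neg] at hpos
      rw [min_eq_left h, min_eq_left (h.trans (le_add_of_nonneg_right (hP (x', z, false)))),
        sub_self, zero_div] at hpos
      exact hpos.false
    have hfull := (negMassAbove_add_le hP hxneg hlt).trans_lt hbudget
    simp only [fprThreshold, if_pos hxneg]
    rw [min_eq_right hfull.le, min_eq_right (by linarith [hxneg]), add_sub_cancel_left,
      div_self hxneg.ne']
  eq_one_of_score_eq_one x z _ hs := by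
    have hneg : ¬0 < P (x, z, false) := fun h => (score_lt_one hP h).ne hs
    simp only [fprThreshold, if_neg hneg]

theorem fpr_fprThreshold (hP : ∀ p, 0 ≤ P p) (hm : MergedScores P) {z : Bool}
    (hz : 0 < ∑ x, P (x, z, false)) {r : ℝ} (hr : r ∈ Set.Icc (0 : ℝ) 1) :
    fpr P (fprThreshold P r) z = r := by
  set N := ∑ x, P (x, z, false)
  set S : Finset X := {x | 0 < P (x, z, false)}
  have hpos_of_ne : ∀ x, P (x, z, false) ≠ 0 → 0 < P (x, z, false) :=
    fun x h => (hP _).lt_of_ne' h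
  have hinj : Set.InjOn (score P · z) S := fun x hx x' hx' h => by
    simp only [S, coe_filter, mem_univ, true_and, Set.mem_ofPred_eq] at hx hx'
    exact hm z x x' (by unfold cellMass; linarith [hP (x, z, true)])
      (by unfold cellMass; linarith [hP (x', z, true)]) h
  have hNS : ∑ x ∈ S, P (x, z, false) = N := sum_filter_of_ne fun x _ => hpos_of_ne x
  have key : ∑ x, fprThreshold P r (x, z) * P (x, z, false) = r * N := by
    rw [← sum_filter_of_ne (p := fun x => 0 < P (x, z, false))
      fun x _ h => hpos_of_ne x (right_ne_zero_of_mul h)]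
    calc ∑ x ∈ S, fprThreshold P r (x, z) * P (x, z, false)
        = ∑ x ∈ S, (min (r * N) (∑ y ∈ S with score P x z < score P y z, P (y, z, false) +
            P (x, z, false)) - min (r * N) (∑ y ∈ S with score P x z < score P y z,
            P (y, z, false))) := sum_congr rfl fun x hx => by
          have hx : 0 < P (x, z, false) := (mem_filter.mp hx).2
          rw [fprThreshold, if_pos hx, div_mul_cancel₀ _ hx.ne', negMassAbove, filter_filter]
      _ = min (r * N) N - min (r * N) 0 := by
          rw [sum_sub_telescope_of_injOn S hinj, hNS]
      _ = r * N := by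
          rw [min_eq_left (mul_le_of_le_one_left hz.le hr.2),
            min_eq_right (mul_nonneg hr.1 hz.le), sub_zero]
  rw [fpr, key, mul_div_assoc, div_self hz.ne', mul_one]

end Threshold

section Boundary

variable {X : Type*} [Fintype X] {P : X × Bool × Bool → ℝ} {f : X × Bool → ℝ}

theorem fpr_mem_Icc (hP : ∀ p, 0 ≤ P p) {z : Bool} (hz : 0 < ∑ x, P (x, z, false))
    (hf : InUnit f) : fpr P f z ∈ Set.Icc 0 1 :=
  ⟨div_nonneg (sum_nonneg fun _ _ => mul_nonneg (hf _).1 (hP _)) hz.le,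
    (div_le_one hz).mpr (sum_le_sum fun _ _ => mul_le_of_le_one_left (hP _) (hf _).2)⟩

theorem fpr_add_smul (f e : X × Bool → ℝ) (t : ℝ) (z : Bool) :
    fpr P (f + t • e) z = fpr P f z + t * fpr P e z := by
  simp only [fpr, Pi.add_apply, Pi.smul_apply, smul_eq_mul, add_mul, sum_add_distrib, mul_assoc,
    ← mul_sum, add_div, mul_div_assoc]

theorem loss_add_smul (f e : X × Bool → ℝ) (t : ℝ) :
    loss P (f + t • e) =
      loss P f + t * ∑ x, ∑ z, (P (x, z, false) - P (x, z, true)) * e (x, z) := by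
  simp only [loss, Pi.add_apply, Pi.smul_apply, smul_eq_mul, mul_sum, ← sum_add_distrib]
  exact sum_congr rfl fun x _ => sum_congr rfl fun z _ => by ring

theorem isFPBoundary_one (h0 : ∀ z, 0 < ∑ x, P (x, z, false)) : IsFPBoundary P 1 :=
  ⟨fun _ => 1, fun _ => ⟨zero_le_one, le_rfl⟩, fun _ _ _ _ _ _ _ => rfl, fun _ _ _ _ => rfl,
    fun z => by simp only [fpr, one_mul, div_self (h0 z).ne'], true, fun _ _ => Or.inr rfl⟩

theorem finite_setOf_isFPBoundary (hP : ∀ p, 0 ≤ P p) : {r | IsFPBoundary P r}.Finite := by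
  classical
  refine (Set.finite_range fun w : Bool × Finset X =>
    (∑ x ∈ w.2, P (x, w.1, false)) / ∑ x, P (x, w.1, false)).subset ?_
  rintro r ⟨f, -, -, -, hfr, z, hz⟩
  refine ⟨(z, ({x | f (x, z) = 1} : Finset X)), ?_⟩
  rw [← hfr z, fpr]
  dsimp only
  rw [sum_filter]
  congr 1
  refine sum_congr rfl fun x _ => ?_
  by_cases hx : 0 < cellMass P x z
  · rcases hz x hx with h | h <;> simp [h]
  · have : P (x, z, false) = 0 := by
      unfold cellMass at hx
      linarith [hP (x, z, false), hP (x, z, true)]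
    simp [this]

end Boundary

section Perturbation

variable {X : Type*} [Fintype X] {P : X × Bool × Bool → ℝ} {f : X × Bool → ℝ}

noncomputable def fprShift [DecidableEq X] (P : X × Bool × Bool → ℝ) (xx : Bool → X)
    (q : X × Bool) : ℝ :=
  if q.1 = xx q.2 then (∑ x, P (x, q.2, false)) / P (xx q.2, q.2, false) else 0

theorem fpr_fprShift [DecidableEq X] {xx : Bool → X} {z : Bool} (hz : 0 < ∑ x, P (x, z, false))
    (hxx : 0 < P (xx z, z, false)) : fpr P (fprShift P xx) z = 1 := by
  simp only [fpr, fprShift, ite_mul, zero_mul, sum_ite_eq', mem_univ, if_true,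
    div_mul_cancel₀ _ hxx.ne', div_self hz.ne']

theorem add_smul_fprShift_apply [DecidableEq X] (f : X × Bool → ℝ) (xx : Bool → X) (t : ℝ)
    (x : X) (z : Bool) :
    (f + t • fprShift P xx) (x, z) = if x = xx z
      then f (xx z, z) + t * ((∑ x, P (x, z, false)) / P (xx z, z, false)) else f (x, z) := by
  split_ifs with h
  · subst h; simp [fprShift]
  · simp [fprShift, h]

theorem exists_deterministicOn_loss_le (hP : ∀ p, 0 ≤ P p) (hm : MergedScores P)
    (h0 : ∀ z, 0 < ∑ x, P (x, z, false)) (hf : IsMassThreshold P f) {r : ℝ}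
    (hfr : ∀ z, fpr P f z = r) :
    ∃ r' g, IsMassThreshold P g ∧ (∀ z, fpr P g z = r') ∧ (∃ z, IsDeterministicOn P g z) ∧
      loss P g ≤ loss P f := by
  classical
  by_cases hdet : ∃ z, IsDeterministicOn P f z
  · exact ⟨r, f, hf, hfr, hdet, le_rfl⟩
  simp only [IsDeterministicOn, not_exists, not_forall] at hdet
  choose xx hxx hfrac using hdet
  have frac : ∀ q, ¬(f q = 0 ∨ f q = 1) → f q ∈ Set.Ioo 0 1 := fun q h =>
    ⟨(hf.inUnit q).1.lt_of_ne' (not_or.mp h).1, (hf.inUnit q).2.lt_of_ne (not_or.mp h).2⟩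
  have hIoo : ∀ z, f (xx z, z) ∈ Set.Ioo 0 1 := fun z => frac _ (hfrac z)
  have hneg : ∀ z, 0 < P (xx z, z, false) := fun z => by
    by_contra h
    exact (hIoo z).2.ne (hf.eq_one_of_score_eq_one _ _ (hxx z) (score_eq_one hP (hxx z) h))
  have hothers : ∀ z x, 0 < cellMass P x z → x ≠ xx z → f (x, z) = 0 ∨ f (x, z) = 1 :=
    fun z x hx hne => by_contra fun h =>
      hne (hf.isPrefix.eq_of_mem_Ioo hm hx (hxx z) (frac _ h) (hIoo z))
  obtain ⟨t, htD, hmem, z₀, hz₀⟩ := exists_add_mul_mem_Icc_endpoint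
    (a := fun z => f (xx z, z)) (fun z => Set.Ioo_subset_Icc_self (hIoo z))
    (fun z => div_pos (h0 z) (hneg z))
    (∑ x, ∑ z, (P (x, z, false) - P (x, z, true)) * fprShift P xx (x, z))
  have hg := add_smul_fprShift_apply (P := P) f xx t
  refine ⟨r + t, f + t • fprShift P xx, hf.of_eq_of_not_mem_Ioo ?_ ?_, fun z => ?_,
    ⟨z₀, fun x hx => ?_⟩, ?_⟩
  · rintro ⟨x, z⟩
    rw [hg]
    split_ifs
    exacts [hmem z, hf.inUnit _]
  · rintro ⟨x, z⟩ hne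
    rw [hg] at hne
    split_ifs at hne with h
    · exact h ▸ hIoo z
    · exact absurd rfl hne
  · rw [fpr_add_smul, hfr, fpr_fprShift (h0 z) (hneg z), mul_one]
  · rw [hg]
    split_ifs with h
    · exact hz₀
    · exact hothers z₀ x hx h
  · rw [loss_add_smul]
    linarith

end Perturbation

/-- The minimum of `r ↦ L(f_r)` over `[0,1]` is attained at an FP-boundary. -/
theorem stmt14 {X : Type*} [Fintype X] (P : X × Bool × Bool → ℝ) (hP : IsDist P)
    (h0 : ∀ z, 0 < ∑ x, P (x, z, false)) (hm : MergedScores P) (L : ℝ → ℝ)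
    (hL : ∀ r ∈ Set.Icc (0 : ℝ) 1, ∀ f : X × Bool → ℝ,
      InUnit f → IsPrefix P f →
      (∀ x z, 0 < cellMass P x z → score P x z = 1 → f (x, z) = 1) →
      (∀ z, fpr P f z = r) → loss P f = L r) :
    ∃ r' ∈ Set.Icc (0 : ℝ) 1, IsFPBoundary P r' ∧
      ∀ r ∈ Set.Icc (0 : ℝ) 1, L r' ≤ L r := by
  obtain ⟨hP, -⟩ := hP
  have hfpr {f r} (hf : IsMassThreshold P f) (hfr : ∀ z, fpr P f z = r) : r ∈ Set.Icc 0 1 :=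
    hfr true ▸ fpr_mem_Icc hP (h0 true) hf.inUnit
  have hloss {f r} (hf : IsMassThreshold P f) (hfr : ∀ z, fpr P f z = r) : loss P f = L r :=
    hL r (hfpr hf hfr) f hf.inUnit hf.isPrefix hf.eq_one_of_score_eq_one hfr
  obtain ⟨r', ⟨hr', hr'B⟩, hmin⟩ := Set.exists_min_image {r | r ∈ Set.Icc 0 1 ∧ IsFPBoundary P r}
    L ((finite_setOf_isFPBoundary hP).subset fun _ h => h.2)
    ⟨1, ⟨zero_le_one, le_rfl⟩, isFPBoundary_one h0⟩
  refine ⟨r', hr', hr'B, fun r hr => ?_⟩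
  have hf := isMassThreshold_fprThreshold hP r
  have hfr := fun z => fpr_fprThreshold hP hm (h0 z) hr
  obtain ⟨r'', g, hg, hgr, ⟨z, hz⟩, hle⟩ := exists_deterministicOn_loss_le hP hm h0 hf hfr
  calc L r' ≤ L r'' := hmin r'' ⟨hfpr hg hgr,
        g, hg.inUnit, hg.isPrefix, hg.eq_one_of_score_eq_one, hgr, z, hz⟩
    _ = loss P g := (hloss hg hgr).symm
    _ ≤ loss P (fprThreshold P r) := hle
    _ = L r := hloss hf hfr
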